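/- Let (S, Act, D) be a finite, finitely branching probabilistic automaton and define d(s,t) = inf { ε ∈ [0,1] | s ∼_ε t }, where s ∼_ε t means some ε-bisimulation relates s and t (setting d(s,t) = 1 if no such ε exists). Then d is a pseudo-metric on S: d(s,s) = 0, d(s,t) = d(t,s), and d(s,u) ≤ d(s,t) + d(t,u). -/

import Mathlib

open Finset

noncomputable def mass {S : Type*} [Fintype S] (μ : S → ℝ) (E : Set S) : ℝ :=
  ∑ s, Set.indicator E μ s

def relImage {S T : Type*} (R : S → T → Prop) (E : Set S) : Set T :=
  {y | ∃ x ∈ E, R x y}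

def IsSubdist {S : Type*} [Fintype S] (μ : S → ℝ) : Prop :=
  (∀ s, 0 ≤ μ s) ∧ ∑ s, μ s ≤ 1

def Lift {S : Type*} [Fintype S] (ε : ℝ) (R : S → S → Prop) (μ ν : S → ℝ) : Prop :=
  ∀ E : Set S, mass μ E ≤ mass ν (relImage R E) + ε

def IsEpsSim {S Act : Type*} [Fintype S] (D : S → Act → (S → ℝ) → Prop) (ε : ℝ)
    (R : S → S → Prop) : Prop :=
  ∀ s t, R s t → ∀ a μ, D s a μ → ∃ ν, D t a ν ∧ Lift ε R μ ν

/-- s ∼_ε t: some symmetric ε-simulation (i.e. ε-bisimulation) relates s and t. -/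
def Bisim {S Act : Type*} [Fintype S] (D : S → Act → (S → ℝ) → Prop) (ε : ℝ)
    (s t : S) : Prop :=
  ∃ R : S → S → Prop, IsEpsSim D ε R ∧ (∀ x y, R x y → R y x) ∧ R s t

open scoped Classical in
/-- d(s,t) = inf { ε ∈ [0,1] | s ∼_ε t }, with d(s,t) = 1 if no such ε exists. -/
noncomputable def pdist {S Act : Type*} [Fintype S]
    (D : S → Act → (S → ℝ) → Prop) (s t : S) : ℝ :=
  if ∃ ε ∈ Set.Icc (0:ℝ) 1, Bisim D ε s t then
    sInf {ε | ε ∈ Set.Icc (0:ℝ) 1 ∧ Bisim D ε s t}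
  else 1

/-!
Bisimilarity at level ε is reflexive at level 0, symmetric, and additive under composition:
if `R₁` is an ε₁- and `R₂` an ε₂-bisimulation, then the composite "`R₁` then `R₂`" together
with its converse "`R₂` then `R₁`" is an (ε₁ + ε₂)-bisimulation. Indeed the image of a set under a composite relation is the iterated
image, so liftings compose with added slack, and enlarging the target relation only increases
the mass on the right. The three pseudometric axioms follow by passing to infima; for the
triangle inequality, approximate both infima within half of the excess.
-/

open Relation

lemma relImage_eq_self {S : Type*} (E : Set S) : relImage (· = ·) E = E := by
  ext y
  simp [relImage]

lemma relImage_comp {S T U : Type*} (R₁ : S → T → Prop) (R₂ : T → U → Prop) (E : Set S) :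
    relImage (Comp R₁ R₂) E = relImage R₂ (relImage R₁ E) := by
  ext y
  simp only [relImage, Comp, Set.mem_ofPred_eq]
  grind

section

variable {S Act : Type*} [Fintype S]

lemma mass_mono {μ : S → ℝ} (hμ : ∀ s, 0 ≤ μ s) {E F : Set S} (h : E ⊆ F) :
    mass μ E ≤ mass μ F :=
  Finset.sum_le_sum fun s _ => Set.indicator_le_indicator_of_subset h hμ s

namespace Lift

lemma refl (μ : S → ℝ) : Lift 0 (· = ·) μ μ := fun E => by
  rw [relImage_eq_self, add_zero]

lemma mono {ε : ℝ} {R Q : S → S → Prop} {μ ν : S → ℝ} (hν : ∀ s, 0 ≤ ν s)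
    (hRQ : ∀ x y, R x y → Q x y) (h : Lift ε R μ ν) : Lift ε Q μ ν := by
  intro E
  refine (h E).trans (add_le_add_left (mass_mono hν ?_) ε)
  rintro y ⟨x, hx, hxy⟩
  exact ⟨x, hx, hRQ x y hxy⟩

lemma comp {ε₁ ε₂ : ℝ} {R₁ R₂ : S → S → Prop} {μ ν ρ : S → ℝ}
    (h₁ : Lift ε₁ R₁ μ ν) (h₂ : Lift ε₂ R₂ ν ρ) : Lift (ε₁ + ε₂) (Comp R₁ R₂) μ ρ := by
  intro E
  have := h₂ (relImage R₁ E)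
  rw [relImage_comp]
  linarith [h₁ E]

end Lift

section Simulation

variable {D : S → Act → (S → ℝ) → Prop}

lemma isEpsSim_eq (D : S → Act → (S → ℝ) → Prop) : IsEpsSim D 0 (· = ·) := by
  rintro s _ rfl a μ hμ
  exact ⟨μ, hμ, Lift.refl μ⟩

lemma IsEpsSim.comp {ε₁ ε₂ : ℝ} {R₁ R₂ : S → S → Prop}
    (h₁ : IsEpsSim D ε₁ R₁) (h₂ : IsEpsSim D ε₂ R₂) : IsEpsSim D (ε₁ + ε₂) (Comp R₁ R₂) := by
  rintro s u ⟨t, hst, htu⟩ a μ hμ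
  obtain ⟨ν, hν, hμν⟩ := h₁ s t hst a μ hμ
  obtain ⟨ρ, hρ, hνρ⟩ := h₂ t u htu a ν hν
  exact ⟨ρ, hρ, hμν.comp hνρ⟩

lemma IsEpsSim.sup (hD : ∀ s a μ, D s a μ → ∀ x, 0 ≤ μ x) {ε : ℝ} {R₁ R₂ : S → S → Prop}
    (h₁ : IsEpsSim D ε R₁) (h₂ : IsEpsSim D ε R₂) :
    IsEpsSim D ε fun x y => R₁ x y ∨ R₂ x y := by
  rintro s t (hst | hst) a μ hμ
  · obtain ⟨ν, hν, hμν⟩ := h₁ s t hst a μ hμ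
    exact ⟨ν, hν, hμν.mono (hD t a ν hν) fun _ _ => Or.inl⟩
  · obtain ⟨ν, hν, hμν⟩ := h₂ s t hst a μ hμ
    exact ⟨ν, hν, hμν.mono (hD t a ν hν) fun _ _ => Or.inr⟩

end Simulation

namespace Bisim

variable {D : S → Act → (S → ℝ) → Prop}

lemma refl (D : S → Act → (S → ℝ) → Prop) (s : S) : Bisim D 0 s s :=
  ⟨(· = ·), isEpsSim_eq D, fun _ _ => Eq.symm, rfl⟩

lemma symm {ε : ℝ} {s t : S} : Bisim D ε s t → Bisim D ε t s
  | ⟨R, hR, hsymm, hst⟩ => ⟨R, hR, hsymm, hsymm s t hst⟩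

lemma comm {ε : ℝ} {s t : S} : Bisim D ε s t ↔ Bisim D ε t s :=
  ⟨symm, symm⟩

lemma trans (hD : ∀ s a μ, D s a μ → ∀ x, 0 ≤ μ x) {ε₁ ε₂ : ℝ} {s t u : S}
    (h₁ : Bisim D ε₁ s t) (h₂ : Bisim D ε₂ t u) : Bisim D (ε₁ + ε₂) s u := by
  obtain ⟨R₁, hR₁, hsymm₁, hst⟩ := h₁
  obtain ⟨R₂, hR₂, hsymm₂, htu⟩ := h₂
  refine ⟨fun x y => Comp R₁ R₂ x y ∨ Comp R₂ R₁ x y,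
    (hR₁.comp hR₂).sup hD (add_comm ε₂ ε₁ ▸ hR₂.comp hR₁), ?_, Or.inl ⟨t, hst, htu⟩⟩
  rintro x y (⟨z, hxz, hzy⟩ | ⟨z, hxz, hzy⟩)
  · exact Or.inr ⟨z, hsymm₂ _ _ hzy, hsymm₁ _ _ hxz⟩
  · exact Or.inl ⟨z, hsymm₁ _ _ hzy, hsymm₂ _ _ hxz⟩

end Bisim

section Pdist

variable (D : S → Act → (S → ℝ) → Prop)

lemma pdist_nonneg (s t : S) : 0 ≤ pdist D s t := by
  unfold pdist
  split_ifs
  · exact Real.sInf_nonneg fun _ hε => hε.1.1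
  · exact zero_le_one

lemma pdist_le_of_bisim {s t : S} {ε : ℝ} (hε₀ : 0 ≤ ε) (hε₁ : ε ≤ 1) (h : Bisim D ε s t) :
    pdist D s t ≤ ε := by
  unfold pdist
  rw [if_pos ⟨ε, ⟨hε₀, hε₁⟩, h⟩]
  exact csInf_le (by exact ⟨0, fun _ hε => hε.1.1⟩) ⟨⟨hε₀, hε₁⟩, h⟩

lemma pdist_le_one (s t : S) : pdist D s t ≤ 1 := by
  by_cases hex : ∃ ε ∈ Set.Icc (0:ℝ) 1, Bisim D ε s t
  · obtain ⟨ε, hε, h⟩ := hex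
    exact (pdist_le_of_bisim D hε.1 hε.2 h).trans hε.2
  · rw [pdist, if_neg hex]

lemma exists_bisim_lt_of_pdist_lt {s t : S} {c : ℝ} (hc : c ≤ 1) (h : pdist D s t < c) :
    ∃ ε, 0 ≤ ε ∧ ε < c ∧ Bisim D ε s t := by
  unfold pdist at h
  split_ifs at h with hex
  · obtain ⟨ε, hε, hb⟩ := hex
    obtain ⟨ε, ⟨⟨hε₀, -⟩, hb⟩, hεc⟩ := exists_lt_of_csInf_lt (by exact ⟨ε, hε, hb⟩) h
    exact ⟨ε, hε₀, hεc, hb⟩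
  · linarith

lemma pdist_self (s : S) : pdist D s s = 0 :=
  le_antisymm (pdist_le_of_bisim D le_rfl zero_le_one (Bisim.refl D s)) (pdist_nonneg D s s)

lemma pdist_comm (s t : S) : pdist D s t = pdist D t s := by
  unfold pdist
  congr 1 <;> simp only [Bisim.comm (s := s)]

lemma pdist_triangle (hD : ∀ s a μ, D s a μ → ∀ x, 0 ≤ μ x) (s t u : S) :
    pdist D s u ≤ pdist D s t + pdist D t u := by
  refine le_of_forall_gt_imp_ge_of_dense fun c hc => ?_
  rcases le_or_gt 1 c with hc₁ | hc₁
  · exact (pdist_le_one D s u).trans hc₁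
  set η := (c - (pdist D s t + pdist D t u)) / 2 with hη
  obtain ⟨ε₁, hε₁₀, hε₁, h₁⟩ := exists_bisim_lt_of_pdist_lt D (s := s) (t := t)
    (c := pdist D s t + η) (by linarith [pdist_nonneg D t u]) (by linarith)
  obtain ⟨ε₂, hε₂₀, hε₂, h₂⟩ := exists_bisim_lt_of_pdist_lt D (s := t) (t := u)
    (c := pdist D t u + η) (by linarith [pdist_nonneg D s t]) (by linarith)
  exact (pdist_le_of_bisim D (by positivity) (by linarith) (h₁.trans hD h₂)).trans (by linarith)

end Pdist

end

theorem pdist_pseudometric_general {S Act : Type*} [Fintype S]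
    (D : S → Act → (S → ℝ) → Prop)
    (hD : ∀ s a μ, D s a μ → IsSubdist μ) :
    (∀ s : S, pdist D s s = 0) ∧
    (∀ s t : S, pdist D s t = pdist D t s) ∧
    (∀ s t u : S, pdist D s u ≤ pdist D s t + pdist D t u) :=
  ⟨pdist_self D, pdist_comm D, pdist_triangle D fun s a μ h => (hD s a μ h).1⟩

/-- d is a pseudo-metric: reflexivity, symmetry, triangle inequality. -/
theorem pdist_pseudometric {S Act : Type*} [Fintype S]
    (D : S → Act → (S → ℝ) → Prop)
    (hD : ∀ s a μ, D s a μ → IsSubdist μ)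
    (hfb : ∀ s a, {μ | D s a μ}.Finite) :
    (∀ s : S, pdist D s s = 0) ∧
    (∀ s t : S, pdist D s t = pdist D t s) ∧
    (∀ s t u : S, pdist D s u ≤ pdist D s t + pdist D t u) :=
  pdist_pseudometric_general D hD
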